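/- Let (x_j)_{j≥0} be the iterates of the stochastic coordinate descent (SCD) method applied to minimizing f_β over the nonnegative orthant, started from x_0 ≥ 0, with coordinate indices i(j) chosen independently and uniformly at random from {1,…,n}. Suppose ‖x_j − x(β)‖₂ ≤ R holds for all iterates j (almost surely), and let l := 1/β and f_β* := f_β(x(β)). Then for every j ≥ 0, E‖x_j − x(β)‖² + (2/L_max) E(f_β(x_j) − f_β*) ≤ (1 − l/(n(l + L_max)))^j (R² + (2/L_max)(f_β(x_0) − f_β*)), where the expectation is over the random index choices i(0), …, i(j−1). -/

import Mathlib

open Matrix Finset MeasureTheory ProbabilityTheory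

/-- Euclidean norm of a finitely-indexed real vector. -/
noncomputable def l2norm {ι : Type*} [Fintype ι] (x : ι → ℝ) : ℝ :=
  Real.sqrt (∑ i, (x i) ^ 2)

/-- Frobenius norm of a real matrix. -/
noncomputable def frobNorm {ι κ : Type*} [Fintype ι] [Fintype κ] (A : Matrix ι κ ℝ) : ℝ :=
  Real.sqrt (∑ i, ∑ j, (A i j) ^ 2)

/-- Euclidean inner product. -/
noncomputable def rdot {ι : Type*} [Fintype ι] (a b : ι → ℝ) : ℝ := ∑ i, a i * b i

/-- The regularized quadratic penalty objective
`f_β(x) = cᵀx − ūᵀ(Ax−b) + (β/2)‖Ax−b‖² + (1/(2β))‖x−x̄‖²`. -/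
noncomputable def fpen {ι κ : Type*} [Fintype ι] [Fintype κ]
    (A : Matrix ι κ ℝ) (b : ι → ℝ) (c : κ → ℝ) (ub : ι → ℝ) (xb : κ → ℝ)
    (β : ℝ) (x : κ → ℝ) : ℝ :=
  rdot c x - rdot ub (A.mulVec x - b) + (β / 2) * l2norm (A.mulVec x - b) ^ 2
    + (1 / (2 * β)) * l2norm (x - xb) ^ 2

/-- The gradient map `∇f_β(x) = c − Aᵀū + βAᵀ(Ax − b) + (1/β)(x − x̄)` of `f_β`. -/
noncomputable def gradf {ι κ : Type*} [Fintype ι] [Fintype κ]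
    (A : Matrix ι κ ℝ) (b : ι → ℝ) (c : κ → ℝ) (ub : ι → ℝ) (xb : κ → ℝ)
    (β : ℝ) (x : κ → ℝ) : κ → ℝ :=
  c - Aᵀ.mulVec ub + β • Aᵀ.mulVec (A.mulVec x - b) + (1 / β) • (x - xb)

/-! Each SCD step is a projected gradient step in a single coordinate. Coordinatewise
`L_max`-smoothness of `f_β`, together with the optimality condition of the one-dimensional
projection onto `[0, ∞)`, shows that updating coordinate `i` changes the potential
`Φ(x) = ‖x - x(β)‖² + (2 / L_max) (f_β(x) - f_β*)` by at most
`(2 / L_max) ∂ᵢf_β(x) (x(β)ᵢ - xᵢ)`. Summed over `i` this is `(2 / L_max) ⟨∇f_β(x), x(β) - x⟩`,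
which the `l`-strong convexity of `f_β` (`l = 1 / β`) bounds by
`-(2 / L_max) (f_β(x) - f_β*) - (l / L_max) ‖x - x(β)‖²`; hence the average of `Φ` over the
`n` possible updates is at most `(1 - l / (n (l + L_max))) Φ(x)`. The iterate `x_j` is a function
of `(i(0), …, i(j-1))`, which by independence is uniformly distributed on `{1, …, n}ʲ`, so
`E Φ(x_j)` is the average of `Φ` over all index sequences, and the one-step contraction iterates.
Finally `‖x_0 - x(β)‖ ≤ R` bounds `Φ(x_0)`. -/

lemma l2norm_sq {ι : Type*} [Fintype ι] (x : ι → ℝ) : l2norm x ^ 2 = ∑ i, x i ^ 2 :=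
  Real.sq_sqrt (by positivity)

lemma sum_sq_le_sq_of_l2norm_le {ι : Type*} [Fintype ι] {x : ι → ℝ} {R : ℝ} (h : l2norm x ≤ R) :
    ∑ i, x i ^ 2 ≤ R ^ 2 := by
  rw [← l2norm_sq]
  exact pow_le_pow_left₀ (Real.sqrt_nonneg _) h 2

lemma l2norm_sq_eq_dotProduct {ι : Type*} [Fintype ι] (x : ι → ℝ) : l2norm x ^ 2 = x ⬝ᵥ x := by
  rw [l2norm_sq]; simp only [dotProduct, sq]

lemma rdot_eq_dotProduct {ι : Type*} [Fintype ι] (a b : ι → ℝ) : rdot a b = a ⬝ᵥ b := rfl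

lemma sum_sq_sub_update {ι : Type*} [Fintype ι] [DecidableEq ι] (x w : ι → ℝ) (i : ι) (v : ℝ) :
    ∑ j, (Function.update x i v j - w j) ^ 2
      = ∑ j, (x j - w j) ^ 2 + ((v - w i) ^ 2 - (x i - w i) ^ 2) := by
  have hupdate : (fun j => (Function.update x i v j - w j) ^ 2)
      = Function.update (fun j => (x j - w j) ^ 2) i ((v - w i) ^ 2) := by
    funext j
    by_cases hj : j = i
    · subst hj; simp
    · simp [hj]
  rw [hupdate, Finset.sum_update_of_mem (Finset.mem_univ i),
    ← Finset.add_sum_erase _ _ (Finset.mem_univ i), Finset.sdiff_singleton_eq_erase]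
  ring

section PenaltyObjective

variable {ι κ : Type*} [Fintype ι] [Fintype κ]
  (A : Matrix ι κ ℝ) (b : ι → ℝ) (c : κ → ℝ) (ub : ι → ℝ) (xb : κ → ℝ) {β : ℝ}

lemma fpen_add (hβ : β ≠ 0) (x d : κ → ℝ) :
    fpen A b c ub xb β (x + d) = fpen A b c ub xb β x + gradf A b c ub xb β x ⬝ᵥ d
      + β / 2 * (A *ᵥ d ⬝ᵥ A *ᵥ d) + 1 / (2 * β) * (d ⬝ᵥ d) := by
  have htranspose : ∀ u, Aᵀ *ᵥ u ⬝ᵥ d = u ⬝ᵥ A *ᵥ d := fun u => by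
    rw [dotProduct_comm, dotProduct_mulVec, vecMul_transpose, dotProduct_comm]
  simp only [fpen, gradf, rdot_eq_dotProduct, l2norm_sq_eq_dotProduct, mulVec_add,
    add_sub_right_comm _ (A *ᵥ d), add_sub_right_comm x d]
  simp only [dotProduct_add, add_dotProduct, dotProduct_sub, sub_dotProduct, smul_dotProduct,
    smul_eq_mul, htranspose, dotProduct_comm d, dotProduct_comm (A *ᵥ d) (A *ᵥ x),
    dotProduct_comm (A *ᵥ d) b]
  field_simp
  ring

lemma fpen_update [DecidableEq κ] (hβ : β ≠ 0) (x : κ → ℝ) (i : κ) (v : ℝ) :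
    fpen A b c ub xb β (Function.update x i v) = fpen A b c ub xb β x
      + gradf A b c ub xb β x i * (v - x i)
      + (β * ∑ k, A k i ^ 2 + 1 / β) / 2 * (v - x i) ^ 2 := by
  have hupdate : Function.update x i v = x + Pi.single i (v - x i) := by
    funext k
    by_cases hk : k = i
    · subst hk; simp
    · simp [hk]
  have hcol : A *ᵥ Pi.single i (v - x i) ⬝ᵥ A *ᵥ Pi.single i (v - x i)
      = (∑ k, A k i ^ 2) * (v - x i) ^ 2 := by
    simp only [mulVec_single, dotProduct, Finset.sum_mul]
    exact Finset.sum_congr rfl fun k _ => by simp; ring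
  rw [hupdate, fpen_add A b c ub xb hβ, dotProduct_single, single_dotProduct, Pi.single_eq_same,
    hcol]
  field_simp
  ring

lemma fpen_update_le [DecidableEq κ] (hβ : 0 < β) {L : ℝ}
    (hL : ∀ i, β * ∑ k, A k i ^ 2 + 1 / β ≤ L) (x : κ → ℝ) (i : κ) (v : ℝ) :
    fpen A b c ub xb β (Function.update x i v) ≤ fpen A b c ub xb β x
      + gradf A b c ub xb β x i * (v - x i) + L / 2 * (v - x i) ^ 2 := by
  rw [fpen_update A b c ub xb hβ.ne']
  gcongr
  exact hL i

lemma fpen_strongly_convex (hβ : 0 < β) (x y : κ → ℝ) :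
    fpen A b c ub xb β x + gradf A b c ub xb β x ⬝ᵥ (y - x)
      + 1 / β / 2 * ∑ i, (x i - y i) ^ 2 ≤ fpen A b c ub xb β y := by
  have hexpand := fpen_add A b c ub xb hβ.ne' x (y - x)
  rw [add_sub_cancel] at hexpand
  have hdist : (y - x) ⬝ᵥ (y - x) = ∑ i, (x i - y i) ^ 2 :=
    Finset.sum_congr rfl fun i _ => by simp; ring
  have hA : 0 ≤ β / 2 * (A *ᵥ (y - x) ⬝ᵥ A *ᵥ (y - x)) :=
    mul_nonneg (by positivity) (Finset.sum_nonneg fun k _ => mul_self_nonneg _)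
  rw [hexpand, hdist, show 1 / (2 * β) = 1 / β / 2 by ring]
  linarith

end PenaltyObjective

section MaxCoordLipschitz

variable {ι κ : Type*} [Fintype ι] (A : Matrix ι κ ℝ) {β : ℝ}

noncomputable def maxCoordLipschitz (β : ℝ) : ℝ :=
  β * (⨆ i, ∑ k, A k i ^ 2) + β⁻¹

lemma le_maxCoordLipschitz [Finite κ] (hβ : 0 < β) (i : κ) :
    β * ∑ k, A k i ^ 2 + 1 / β ≤ maxCoordLipschitz A β := by
  rw [maxCoordLipschitz, one_div]
  gcongr
  exact le_ciSup (Finite.bddAbove_range fun i => ∑ k, A k i ^ 2) i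

lemma maxCoordLipschitz_pos (hβ : 0 < β) : 0 < maxCoordLipschitz A β := by
  have : 0 ≤ ⨆ i : κ, ∑ k, A k i ^ 2 := Real.iSup_nonneg fun i => by positivity
  exact add_pos_of_nonneg_of_pos (by positivity) (by positivity)

end MaxCoordLipschitz

section IterationAlongSequences

variable {α ι : Type*} (T : α → ι → α)

lemma eq_foldl_of_succ_eq {u : ℕ → α} {s : ℕ → ι} (hu : ∀ j, u (j + 1) = T (u j) (s j)) (j : ℕ) :
    u j = Fin.foldl j (fun x k => T x (s k)) (u 0) := by
  induction j with
  | zero => rw [Fin.foldl_zero]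
  | succ j ih => rw [Fin.foldl_succ_last, hu, ih]; rfl

variable {S : Set α} (hS : ∀ x ∈ S, ∀ i, T x i ∈ S)
include hS

lemma foldl_mem {x₀ : α} (hx₀ : x₀ ∈ S) (j : ℕ) (y : Fin j → ι) :
    Fin.foldl j (fun x k => T x (y k)) x₀ ∈ S := by
  induction j with
  | zero => rwa [Fin.foldl_zero]
  | succ j ih => rw [Fin.foldl_succ_last]; exact hS _ (ih _) _

lemma sum_comp_foldl_le [Fintype ι] (Φ : α → ℝ) {c : ℝ} (hc : 0 ≤ c)
    (hT : ∀ x ∈ S, ∑ i, Φ (T x i) ≤ c * Φ x) {x₀ : α} (hx₀ : x₀ ∈ S) (j : ℕ) :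
    ∑ y : Fin j → ι, Φ (Fin.foldl j (fun x k => T x (y k)) x₀) ≤ c ^ j * Φ x₀ := by
  induction j with
  | zero => simp
  | succ j ih =>
    have hsplit : ∑ y : Fin (j + 1) → ι, Φ (Fin.foldl (j + 1) (fun x k => T x (y k)) x₀)
        = ∑ z : Fin j → ι, ∑ i, Φ (T (Fin.foldl j (fun x k => T x (z k)) x₀) i) := by
      rw [← (Fin.snocEquiv fun _ => ι).sum_comp, Fintype.sum_prod_type, Finset.sum_comm]
      simp [Fin.snocEquiv_apply, Fin.foldl_succ_last]
    rw [hsplit]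
    calc _ ≤ ∑ z : Fin j → ι, c * Φ (Fin.foldl j (fun x k => T x (z k)) x₀) :=
          Finset.sum_le_sum fun z _ => hT _ (foldl_mem T hS hx₀ j z)
      _ ≤ c * (c ^ j * Φ x₀) := by rw [← Finset.mul_sum]; gcongr
      _ = c ^ (j + 1) * Φ x₀ := by ring

end IterationAlongSequences

section IndependentIndices

variable {Ω ι : Type*} [MeasurableSpace Ω] {μ : Measure Ω} [MeasurableSpace ι]
  [MeasurableSingletonClass ι] {idx : ℕ → Ω → ι} {p : ENNReal}

lemma measure_indices_eq (hindep : iIndepFun idx μ) (hp : ∀ j v, μ {ω | idx j ω = v} = p)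
    (j : ℕ) (y : Fin j → ι) :
    μ ((fun ω (k : Fin j) => idx k ω) ⁻¹' {y}) = p ^ j := by
  have hinter : (fun ω (k : Fin j) => idx k ω) ⁻¹' {y}
      = ⋂ k ∈ (Finset.univ : Finset (Fin j)), idx k ⁻¹' {y k} := by
    ext ω
    simp [funext_iff]
  rw [hinter, (hindep.precomp Fin.val_injective).measure_inter_preimage_eq_mul _
    fun k _ => measurableSet_singleton (y k)]
  simp [Set.preimage, hp]

lemma integral_comp_indices [Fintype ι] [IsFiniteMeasure μ] (hmeas : ∀ j, Measurable (idx j))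
    (hindep : iIndepFun idx μ) (hp : ∀ j v, μ {ω | idx j ω = v} = p) (j : ℕ)
    (G : (Fin j → ι) → ℝ) :
    ∫ ω, G (fun k => idx k ω) ∂μ = p.toReal ^ j * ∑ y, G y := by
  have hY : Measurable fun ω (k : Fin j) => idx k ω := measurable_pi_lambda _ fun k => hmeas k
  rw [← integral_map hY.aemeasurable (measurable_of_countable G).aestronglyMeasurable,
    integral_fintype Integrable.of_finite, Finset.mul_sum]
  refine Finset.sum_congr rfl fun y _ => ?_
  rw [Measure.real, Measure.map_apply hY (measurableSet_singleton y), measure_indices_eq hindep hp,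
    ENNReal.toReal_pow, smul_eq_mul]

lemma integral_add_mul_integral_comp_indices [Fintype ι] [IsFiniteMeasure μ]
    (hmeas : ∀ j, Measurable (idx j)) (hindep : iIndepFun idx μ)
    (hp : ∀ j v, μ {ω | idx j ω = v} = p) (j : ℕ) (G H : (Fin j → ι) → ℝ) (a : ℝ) :
    ∫ ω, G (fun k => idx k ω) ∂μ + a * ∫ ω, H (fun k => idx k ω) ∂μ
      = p.toReal ^ j * ∑ y, (G y + a * H y) := by
  rw [integral_comp_indices hmeas hindep hp, integral_comp_indices hmeas hindep hp,
    Finset.sum_add_distrib, ← Finset.mul_sum]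
  ring

end IndependentIndices

/-- `max 0 (a - g / L)` minimizes `g * t + L / 2 * (t - a) ^ 2` over `t ≥ 0`; this is its
first-order optimality condition. -/
lemma projected_step_variational {a g L z : ℝ} (hL : 0 < L) (hz : 0 ≤ z) :
    0 ≤ (g + L * (max 0 (a - 1 / L * g) - a)) * (z - max 0 (a - 1 / L * g)) := by
  rcases le_total 0 (a - 1 / L * g) with h | h
  · have hstat : g + L * (a - 1 / L * g - a) = 0 := by field_simp; ring
    rw [max_eq_right h, hstat, zero_mul]
  · rw [max_eq_left h]
    have hg : L * a ≤ g := by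
      have := mul_le_mul_of_nonneg_left h hL.le
      field_simp at this
      linarith
    exact mul_nonneg (by linarith) (by linarith)

lemma one_sub_div_mul_add_nonneg {n : ℕ} {l L : ℝ} (hn : n ≠ 0) (hl : 0 < l) (hL : 0 < L) :
    0 ≤ 1 - l / (n * (l + L)) := by
  have : (1 : ℝ) ≤ n := Nat.one_le_cast.2 (Nat.pos_of_ne_zero hn)
  rw [sub_nonneg, div_le_one (by positivity)]
  nlinarith

lemma div_add_mul_le_add {l L V F : ℝ} (hl : 0 < l) (hL : 0 < L) (hV : 0 ≤ V) (hF : 0 ≤ F) :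
    l / (l + L) * (V + 2 / L * F) ≤ l / L * V + 2 / L * F := by
  have hV' : l / (l + L) * V ≤ l / L * V := by
    gcongr
    linarith
  have hF' : l / (l + L) * (2 / L * F) ≤ 2 / L * F :=
    mul_le_of_le_one_left (by positivity) ((div_le_one (by linarith)).2 (by linarith))
  linarith

section CoordinateDescent

variable {ι : Type*} [DecidableEq ι] (g : (ι → ℝ) → ι → ℝ) (L : ℝ)

noncomputable def projCoordStep (x : ι → ℝ) (i : ι) : ι → ℝ :=
  Function.update x i (max 0 (x i - 1 / L * g x i))

lemma projCoordStep_nonneg {x : ι → ℝ} (hx : 0 ≤ x) (i : ι) :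
    0 ≤ projCoordStep g L x i := by
  intro k
  by_cases hk : k = i
  · subst hk; simp [projCoordStep]
  · simpa [projCoordStep, hk] using hx k

variable {g L}

lemma eq_foldl_projCoordStep {u : ℕ → ι → ℝ} {s : ℕ → ι}
    (hu : ∀ j, u (j + 1) = fun i => if i = s j then max 0 (u j i - 1 / L * g (u j) i) else u j i)
    (j : ℕ) : u j = Fin.foldl j (fun x k => projCoordStep g L x (s k)) (u 0) := by
  refine eq_foldl_of_succ_eq (projCoordStep g L) (fun j => ?_) j
  funext i
  by_cases h : i = s j <;> simp [hu, projCoordStep, h]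

variable [Fintype ι]

noncomputable def descentPotential (f : (ι → ℝ) → ℝ) (L : ℝ) (xs x : ι → ℝ) : ℝ :=
  ∑ i, (x i - xs i) ^ 2 + 2 / L * (f x - f xs)

variable {f : (ι → ℝ) → ℝ} {xs : ι → ℝ}

lemma descentPotential_projCoordStep_le (hL : 0 < L)
    (hsmooth : ∀ x i v, f (Function.update x i v) ≤ f x + g x i * (v - x i) + L / 2 * (v - x i) ^ 2)
    (x : ι → ℝ) {i : ι} (hxs : 0 ≤ xs i) :
    descentPotential f L xs (projCoordStep g L x i)
      ≤ descentPotential f L xs x + 2 / L * (g x i * (xs i - x i)) := by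
  set v := max 0 (x i - 1 / L * g x i)
  have hvar : 0 ≤ (g x i + L * (v - x i)) * (xs i - v) := projected_step_variational hL hxs
  have hf := hsmooth x i v
  have hdecrease : 2 / L * (f (Function.update x i v) - f x)
      ≤ 2 / L * (g x i * (v - x i) + L / 2 * (v - x i) ^ 2) := by
    gcongr
    linarith
  simp only [descentPotential, projCoordStep, sum_sq_sub_update]
  have key : 2 / L * (g x i * (v - x i) + L / 2 * (v - x i) ^ 2)
      + ((v - xs i) ^ 2 - (x i - xs i) ^ 2)
      = 2 / L * (g x i * (xs i - x i)) - 2 / L * ((g x i + L * (v - x i)) * (xs i - v)) := by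
    field_simp
    ring
  have : 0 ≤ 2 / L * ((g x i + L * (v - x i)) * (xs i - v)) := by positivity
  linarith

lemma sum_descentPotential_projCoordStep_le [Nonempty ι] {l : ℝ} (hL : 0 < L) (hl : 0 < l)
    (hsmooth : ∀ x i v, f (Function.update x i v) ≤ f x + g x i * (v - x i) + L / 2 * (v - x i) ^ 2)
    (hconvex : ∀ x y, f x + g x ⬝ᵥ (y - x) + l / 2 * ∑ i, (x i - y i) ^ 2 ≤ f y)
    (hxs : 0 ≤ xs) {x : ι → ℝ} (hfx : f xs ≤ f x) :
    ∑ i, descentPotential f L xs (projCoordStep g L x i)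
      ≤ Fintype.card ι * (1 - l / (Fintype.card ι * (l + L))) * descentPotential f L xs x := by
  have hcoef : (Fintype.card ι : ℝ) * (1 - l / (Fintype.card ι * (l + L)))
      = Fintype.card ι - l / (l + L) := by
    have : (Fintype.card ι : ℝ) ≠ 0 := by positivity
    field_simp
  rw [hcoef]
  have hsum : ∑ i, descentPotential f L xs (projCoordStep g L x i)
      ≤ Fintype.card ι * descentPotential f L xs x + 2 / L * (g x ⬝ᵥ (xs - x)) := by
    calc _ ≤ ∑ i, (descentPotential f L xs x + 2 / L * (g x i * (xs i - x i))) :=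
          Finset.sum_le_sum fun i _ => descentPotential_projCoordStep_le hL hsmooth x (hxs i)
      _ = _ := by
          simp only [Finset.sum_add_distrib, Finset.sum_const, Finset.card_univ, nsmul_eq_mul,
            ← Finset.mul_sum, dotProduct, Pi.sub_apply]
  set V := ∑ i, (x i - xs i) ^ 2
  have hinner : 2 / L * (g x ⬝ᵥ (xs - x)) ≤ -(2 / L * (f x - f xs)) - l / L * V := by
    have : 2 / L * (g x ⬝ᵥ (xs - x)) ≤ 2 / L * (f xs - f x - l / 2 * V) := by
      gcongr
      linarith [hconvex x xs]
    linarith [show 2 / L * (l / 2 * V) = l / L * V by ring]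
  have hmix := div_add_mul_le_add hl hL (by positivity : 0 ≤ V) (by linarith : 0 ≤ f x - f xs)
  simp only [descentPotential] at hsum ⊢
  linarith [show (Fintype.card ι - l / (l + L)) * (V + 2 / L * (f x - f xs))
    = Fintype.card ι * (V + 2 / L * (f x - f xs))
      - l / (l + L) * (V + 2 / L * (f x - f xs)) by ring]

lemma average_descentPotential_foldl_le [Nonempty ι] {l : ℝ} (hL : 0 < L) (hl : 0 < l)
    (hsmooth : ∀ x i v, f (Function.update x i v) ≤ f x + g x i * (v - x i) + L / 2 * (v - x i) ^ 2)
    (hconvex : ∀ x y, f x + g x ⬝ᵥ (y - x) + l / 2 * ∑ i, (x i - y i) ^ 2 ≤ f y)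
    (hxs : 0 ≤ xs) (hmin : ∀ x, 0 ≤ x → f xs ≤ f x) {x₀ : ι → ℝ} (hx₀ : 0 ≤ x₀) (j : ℕ) :
    (Fintype.card ι : ℝ)⁻¹ ^ j * ∑ y : Fin j → ι,
        descentPotential f L xs (Fin.foldl j (fun x k => projCoordStep g L x (y k)) x₀)
      ≤ (1 - l / (Fintype.card ι * (l + L))) ^ j * descentPotential f L xs x₀ := by
  have hρ := one_sub_div_mul_add_nonneg (Fintype.card_ne_zero (α := ι)) hl hL
  calc _ ≤ (Fintype.card ι : ℝ)⁻¹ ^ j * ((Fintype.card ι * (1 - l / (Fintype.card ι * (l + L)))) ^ j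
        * descentPotential f L xs x₀) := by
        gcongr
        exact sum_comp_foldl_le (S := {x | 0 ≤ x}) _
          (fun x hx i => projCoordStep_nonneg g L hx i) _ (by positivity)
          (fun x hx => sum_descentPotential_projCoordStep_le hL hl hsmooth hconvex hxs (hmin x hx))
          hx₀ j
    _ = _ := by
        rw [mul_pow, ← mul_assoc, ← mul_assoc, ← mul_pow, inv_mul_cancel₀ (by positivity), one_pow,
          one_mul]

end CoordinateDescent

theorem scd_expected_convergence_general
    {m n : ℕ}
    (A : Matrix (Fin m) (Fin n) ℝ) (b : Fin m → ℝ) (c : Fin n → ℝ)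
    (ub : Fin m → ℝ) (xb : Fin n → ℝ) (β : ℝ) (hβ : 0 < β)
    -- x(β) : the minimizer of f_β over the nonnegative orthant, fβ* its value
    (xβ : Fin n → ℝ) (hβnn : ∀ j, 0 ≤ xβ j)
    (hβmin : ∀ x : Fin n → ℝ, (∀ j, 0 ≤ x j) →
      fpen A b c ub xb β xβ ≤ fpen A b c ub xb β x)
    (fstar : ℝ) (hfstar : fstar = fpen A b c ub xb β xβ)
    -- the constants L_max = β maxᵢ A₋ᵢᵀA₋ᵢ + β⁻¹ and l = 1/β
    (Lmax l : ℝ)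
    (hLmax : Lmax = β * (⨆ i : Fin n, ∑ j, (A j i) ^ 2) + β⁻¹)
    (hl : l = 1 / β)
    -- the underlying probability space and the i.i.d. uniform coordinate indices
    (Ω : Type*) [MeasurableSpace Ω] (μ : Measure Ω) [IsProbabilityMeasure μ]
    (idx : ℕ → Ω → Fin n)
    (hmeas : ∀ j, Measurable (idx j))
    (hunif : ∀ j v, μ {ω | idx j ω = v} = (n : ENNReal)⁻¹)
    (hindep : iIndepFun idx μ)
    -- the SCD iterates
    (x0 : Fin n → ℝ) (hx0 : ∀ j, 0 ≤ x0 j)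
    (X : ℕ → Ω → Fin n → ℝ)
    (hX0 : ∀ ω, X 0 ω = x0)
    (hstep : ∀ j ω, X (j + 1) ω = fun i =>
      if i = idx j ω then
        max 0 (X j ω i - (1 / Lmax) * gradf A b c ub xb β (X j ω) i)
      else X j ω i)
    -- R bounds the distance of all iterates from x(β), almost surely
    (R : ℝ) (hR : ∀ j, ∀ᵐ ω ∂μ, l2norm (X j ω - xβ) ≤ R)
    (j : ℕ) :
    (∫ ω, l2norm (X j ω - xβ) ^ 2 ∂μ)
      + (2 / Lmax) * (∫ ω, (fpen A b c ub xb β (X j ω) - fstar) ∂μ)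
    ≤ (1 - l / (n * (l + Lmax))) ^ j
        * (R ^ 2 + (2 / Lmax) * (fpen A b c ub xb β x0 - fstar)) := by
  subst hfstar hl
  obtain ⟨ω₀, hx0R⟩ := (hR 0).exists
  have : Nonempty (Fin n) := ⟨idx 0 ω₀⟩
  have hLpos : 0 < Lmax := hLmax ▸ maxCoordLipschitz_pos A hβ
  set iter : (Fin j → Fin n) → Fin n → ℝ :=
    fun y => Fin.foldl j (fun x k => projCoordStep (gradf A b c ub xb β) Lmax x (y k)) x0
  have hX : ∀ ω, X j ω = iter fun k => idx k ω := fun ω => by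
    rw [eq_foldl_projCoordStep (u := (X · ω)) (s := (idx · ω)) (fun j => hstep j ω) j, hX0]
  have hpot := average_descentPotential_foldl_le hLpos (one_div_pos.2 hβ)
    (fpen_update_le A b c ub xb hβ fun i => hLmax ▸ le_maxCoordLipschitz A hβ i)
    (fpen_strongly_convex A b c ub xb hβ) hβnn hβmin hx0 j
  rw [Fintype.card_fin] at hpot
  calc _ = (n : ℝ)⁻¹ ^ j * ∑ y, descentPotential (fpen A b c ub xb β) Lmax xβ (iter y) := by
        simp only [hX]
        rw [integral_add_mul_integral_comp_indices hmeas hindep hunif j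
          (fun y => l2norm (iter y - xβ) ^ 2)
          (fun y => fpen A b c ub xb β (iter y) - fpen A b c ub xb β xβ),
          ENNReal.toReal_inv, ENNReal.toReal_natCast]
        simp only [descentPotential, l2norm_sq, Pi.sub_apply]
    _ ≤ _ := hpot
    _ ≤ _ := by
        gcongr
        · exact pow_nonneg (one_sub_div_mul_add_nonneg (Fin.pos_iff_nonempty.2 ‹_›).ne'
            (one_div_pos.2 hβ) hLpos) j
        · rw [hX0] at hx0R
          simp only [descentPotential]
          gcongr
          simpa only [Pi.sub_apply] using sum_sq_le_sq_of_l2norm_le hx0R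

/-- Theorem scd: expected linear convergence of the stochastic
coordinate descent method for the penalty problem. -/
theorem scd_expected_convergence
    {m n : ℕ} (hn : 0 < n)
    (A : Matrix (Fin m) (Fin n) ℝ) (b : Fin m → ℝ) (c : Fin n → ℝ)
    (ub : Fin m → ℝ) (xb : Fin n → ℝ) (β : ℝ) (hβ : 0 < β)
    -- x(β) : the minimizer of f_β over the nonnegative orthant, fβ* its value
    (xβ : Fin n → ℝ) (hβnn : ∀ j, 0 ≤ xβ j)
    (hβmin : ∀ x : Fin n → ℝ, (∀ j, 0 ≤ x j) →
      fpen A b c ub xb β xβ ≤ fpen A b c ub xb β x)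
    (fstar : ℝ) (hfstar : fstar = fpen A b c ub xb β xβ)
    -- the constants L_max = β maxᵢ A₋ᵢᵀA₋ᵢ + β⁻¹ and l = 1/β
    (Lmax l : ℝ)
    (hLmax : Lmax = β * (⨆ i : Fin n, ∑ j, (A j i) ^ 2) + β⁻¹)
    (hl : l = 1 / β)
    -- the underlying probability space and the i.i.d. uniform coordinate indices
    (Ω : Type*) [MeasurableSpace Ω] (μ : Measure Ω) [IsProbabilityMeasure μ]
    (idx : ℕ → Ω → Fin n)
    (hmeas : ∀ j, Measurable (idx j))
    (hunif : ∀ j v, μ {ω | idx j ω = v} = (n : ENNReal)⁻¹)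
    (hindep : iIndepFun idx μ)
    -- the SCD iterates
    (x0 : Fin n → ℝ) (hx0 : ∀ j, 0 ≤ x0 j)
    (X : ℕ → Ω → Fin n → ℝ)
    (hX0 : ∀ ω, X 0 ω = x0)
    (hstep : ∀ j ω, X (j + 1) ω = fun i =>
      if i = idx j ω then
        max 0 (X j ω i - (1 / Lmax) * gradf A b c ub xb β (X j ω) i)
      else X j ω i)
    -- R bounds the distance of all iterates from x(β), almost surely
    (R : ℝ) (hR : ∀ j, ∀ᵐ ω ∂μ, l2norm (X j ω - xβ) ≤ R)
    (j : ℕ) :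
    (∫ ω, l2norm (X j ω - xβ) ^ 2 ∂μ)
      + (2 / Lmax) * (∫ ω, (fpen A b c ub xb β (X j ω) - fstar) ∂μ)
    ≤ (1 - l / (n * (l + Lmax))) ^ j
        * (R ^ 2 + (2 / Lmax) * (fpen A b c ub xb β x0 - fstar)) :=
  scd_expected_convergence_general A b c ub xb β hβ xβ hβnn hβmin fstar hfstar Lmax l hLmax hl Ω μ
    idx hmeas hunif hindep x0 hx0 X hX0 hstep R hR j
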